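/- arXiv:math/0302175 — 3 statements merged into one kernel-verified Lean document; each statement's English description precedes it below -/
import Mathlib

section
/- Let T : ℂ[x,y,z]³ be the triple of polynomials (x(z−y), z(x−y), xz), and let T⁽⁵⁾ = (V₁,V₂,V₃) denote its fifth compositional iterate, obtained by substituting the components of T into themselves five times. Then there exists a nonzero polynomial P ∈ ℂ[x,y,z] such that V₁ = P·x, V₂ = P·y and V₃ = P·z; that is, the fifth iterate of the quadratic Cremona transformation (x,y,z) ↦ (x(z−y), z(x−y), xz) is projectively the identity. -/
/-!
STATEMENT 1: The fifth compositional iterate of the triple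
(x(z−y), z(x−y), xz) of polynomials in ℂ[x,y,z] equals (P·x, P·y, P·z)
for some nonzero polynomial P; i.e. the fifth iterate of the quadratic
Cremona transformation (x,y,z) ↦ (x(z−y), z(x−y), xz) is projectively
the identity.
-/

open MvPolynomial

/-- The triple of homogeneous quadrics `(x(z−y), z(x−y), xz)` defining the
Cremona transformation of Example E4. -/
noncomputable def cremonaTriple : Fin 3 → MvPolynomial (Fin 3) ℂ :=
  ![X 0 * (X 2 - X 1), X 2 * (X 0 - X 1), X 0 * X 2]

/-- Substitution of the triple into a polynomial. -/
noncomputable def cremonaSubst : MvPolynomial (Fin 3) ℂ → MvPolynomial (Fin 3) ℂ :=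
  fun q => MvPolynomial.bind₁ cremonaTriple q

set_option linter.unreachableTactic false
set_option linter.unusedTactic false
set_option maxHeartbeats 1000000

noncomputable def P5 : MvPolynomial (Fin 3) ℂ :=
  X 0^13 * X 1^9 * X 2^9 - 5 * X 0^13 * X 1^8 * X 2^10 + 10 * X 0^13 * X 1^7 * X 2^11 - 10 * X 0^13 * X 1^6 * X 2^12 + 5 * X 0^13 * X 1^5 * X 2^13 - X 0^13 * X 1^4 * X 2^14 - 2 * X 0^12 * X 1^10 * X 2^9 + 9 * X 0^12 * X 1^9 * X 2^10 - 15 * X 0^12 * X 1^8 * X 2^11 + 10 * X 0^12 * X 1^7 * X 2^12 - 3 * X 0^12 * X 1^5 * X 2^14 + X 0^12 * X 1^4 * X 2^15 + X 0^11 * X 1^11 * X 2^9 - 3 * X 0^11 * X 1^10 * X 2^10 + 10 * X 0^11 * X 1^8 * X 2^12 - 15 * X 0^11 * X 1^7 * X 2^13 + 9 * X 0^11 * X 1^6 * X 2^14 - 2 * X 0^11 * X 1^5 * X 2^15 - X 0^10 * X 1^11 * X 2^10 + 5 * X 0^10 * X 1^10 * X 2^11 - 10 * X 0^10 * X 1^9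 * X 2^12 + 10 * X 0^10 * X 1^8 * X 2^13 - 5 * X 0^10 * X 1^7 * X 2^14 + X 0^10 * X 1^6 * X 2^15

lemma P5_ne : P5 ≠ 0 := by
  intro h
  have := congrArg (eval (![1,2,3] : Fin 3 → ℂ)) h
  simp [P5] at this
  norm_num at this

lemma step0_0 : cremonaSubst (X 0) = -X 0 * X 1 + X 0 * X 2 := by
  simp only [cremonaSubst, cremonaTriple, map_add, map_sub, map_neg, map_mul, map_pow, map_ofNat, bind₁_X_right, Matrix.cons_val_zero, Matrix.cons_val_one, Matrix.head_cons, Matrix.cons_val_two, Matrix.tail_cons]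
  all_goals ring

lemma step0_1 : cremonaSubst (X 1) = X 0 * X 2 - X 1 * X 2 := by
  simp only [cremonaSubst, cremonaTriple, map_add, map_sub, map_neg, map_mul, map_pow, map_ofNat, bind₁_X_right, Matrix.cons_val_zero, Matrix.cons_val_one, Matrix.head_cons, Matrix.cons_val_two, Matrix.tail_cons]
  all_goals ring

lemma step0_2 : cremonaSubst (X 2) = X 0 * X 2 := by
  simp only [cremonaSubst, cremonaTriple, map_add, map_sub, map_neg, map_mul, map_pow, map_ofNat, bind₁_X_right, Matrix.cons_val_zero, Matrix.cons_val_one, Matrix.head_cons, Matrix.cons_val_two, Matrix.tail_cons]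
  all_goals ring

lemma step1_0 : cremonaSubst (-X 0 * X 1 + X 0 * X 2) = -X 0 * X 1^2 * X 2 + X 0 * X 1 * X 2^2 := by
  simp only [cremonaSubst, cremonaTriple, map_add, map_sub, map_neg, map_mul, map_pow, map_ofNat, bind₁_X_right, Matrix.cons_val_zero, Matrix.cons_val_one, Matrix.head_cons, Matrix.cons_val_two, Matrix.tail_cons]
  all_goals ring

lemma step1_1 : cremonaSubst (X 0 * X 2 - X 1 * X 2) = -X 0^2 * X 1 * X 2 + X 0 * X 1 * X 2^2 := by
  simp only [cremonaSubst, cremonaTriple, map_add, map_sub, map_neg, map_mul, map_pow, map_ofNat, bind₁_X_right, Matrix.cons_val_zero, Matrix.cons_val_one, Matrix.head_cons, Matrix.cons_val_two, Matrix.tail_cons]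
  all_goals ring

lemma step1_2 : cremonaSubst (X 0 * X 2) = -X 0^2 * X 1 * X 2 + X 0^2 * X 2^2 := by
  simp only [cremonaSubst, cremonaTriple, map_add, map_sub, map_neg, map_mul, map_pow, map_ofNat, bind₁_X_right, Matrix.cons_val_zero, Matrix.cons_val_one, Matrix.head_cons, Matrix.cons_val_two, Matrix.tail_cons]
  all_goals ring

lemma step2_0 : cremonaSubst (-X 0 * X 1^2 * X 2 + X 0 * X 1 * X 2^2) = -X 0^3 * X 1^2 * X 2^3 + X 0^3 * X 1 * X 2^4 + X 0^2 * X 1^3 * X 2^3 - X 0^2 * X 1^2 * X 2^4 := by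
  simp only [cremonaSubst, cremonaTriple, map_add, map_sub, map_neg, map_mul, map_pow, map_ofNat, bind₁_X_right, Matrix.cons_val_zero, Matrix.cons_val_one, Matrix.head_cons, Matrix.cons_val_two, Matrix.tail_cons]
  all_goals ring

lemma step2_1 : cremonaSubst (-X 0^2 * X 1 * X 2 + X 0 * X 1 * X 2^2) = -X 0^4 * X 1^2 * X 2^2 + X 0^4 * X 1 * X 2^3 + X 0^3 * X 1^3 * X 2^2 - X 0^3 * X 1^2 * X 2^3 := by
  simp only [cremonaSubst, cremonaTriple, map_add, map_sub, map_neg, map_mul, map_pow, map_ofNat, bind₁_X_right, Matrix.cons_val_zero, Matrix.cons_val_one, Matrix.head_cons, Matrix.cons_val_two, Matrix.tail_cons]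
  all_goals ring

lemma step2_2 : cremonaSubst (-X 0^2 * X 1 * X 2 + X 0^2 * X 2^2) = X 0^3 * X 1^3 * X 2^2 - 2 * X 0^3 * X 1^2 * X 2^3 + X 0^3 * X 1 * X 2^4 := by
  simp only [cremonaSubst, cremonaTriple, map_add, map_sub, map_neg, map_mul, map_pow, map_ofNat, bind₁_X_right, Matrix.cons_val_zero, Matrix.cons_val_one, Matrix.head_cons, Matrix.cons_val_two, Matrix.tail_cons]
  all_goals ring

lemma step3_0 : cremonaSubst (-X 0^3 * X 1^2 * X 2^3 + X 0^3 * X 1 * X 2^4 + X 0^2 * X 1^3 * X 2^3 - X 0^2 * X 1^2 * X 2^4) = -X 0^7 * X 1^4 * X 2^5 + 2 * X 0^7 * X 1^3 * X 2^6 - X 0^7 * X 1^2 * X 2^7 + X 0^6 * X 1^5 * X 2^5 - X 0^6 * X 1^4 * X 2^6 - X 0^6 * X 1^3 * X 2^7 + X 0^6 * X 1^2 * X 2^8 - X 0^5 * X 1^5 * X 2^6 + 2 * X 0^5 * X 1^4 * X 2^7 - X 0^5 * X 1^3 * X 2^8 := by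
  simp only [cremonaSubst, cremonaTriple, map_add, map_sub, map_neg, map_mul, map_pow, map_ofNat, bind₁_X_right, Matrix.cons_val_zero, Matrix.cons_val_one, Matrix.head_cons, Matrix.cons_val_two, Matrix.tail_cons]
  all_goals ring

lemma step3_1 : cremonaSubst (-X 0^4 * X 1^2 * X 2^2 + X 0^4 * X 1 * X 2^3 + X 0^3 * X 1^3 * X 2^2 - X 0^3 * X 1^2 * X 2^3) = X 0^7 * X 1^5 * X 2^4 - 3 * X 0^7 * X 1^4 * X 2^5 + 3 * X 0^7 * X 1^3 * X 2^6 - X 0^7 * X 1^2 * X 2^7 - X 0^6 * X 1^6 * X 2^4 + 2 * X 0^6 * X 1^5 * X 2^5 - 2 * X 0^6 * X 1^3 * X 2^7 + X 0^6 * X 1^2 * X 2^8 + X 0^5 * X 1^6 * X 2^5 - 3 * X 0^5 * X 1^5 * X 2^6 + 3 * X 0^5 * X 1^4 * X 2^7 - X 0^5 * X 1^3 * X 2^8 := by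
  simp only [cremonaSubst, cremonaTriple, map_add, map_sub, map_neg, map_mul, map_pow, map_ofNat, bind₁_X_right, Matrix.cons_val_zero, Matrix.cons_val_one, Matrix.head_cons, Matrix.cons_val_two, Matrix.tail_cons]
  all_goals ring

lemma step3_2 : cremonaSubst (X 0^3 * X 1^3 * X 2^2 - 2 * X 0^3 * X 1^2 * X 2^3 + X 0^3 * X 1 * X 2^4) = -X 0^6 * X 1^5 * X 2^5 + 3 * X 0^6 * X 1^4 * X 2^6 - 3 * X 0^6 * X 1^3 * X 2^7 + X 0^6 * X 1^2 * X 2^8 + X 0^5 * X 1^6 * X 2^5 - 3 * X 0^5 * X 1^5 * X 2^6 + 3 * X 0^5 * X 1^4 * X 2^7 - X 0^5 * X 1^3 * X 2^8 := by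
  simp only [cremonaSubst, cremonaTriple, map_add, map_sub, map_neg, map_mul, map_pow, map_ofNat, bind₁_X_right, Matrix.cons_val_zero, Matrix.cons_val_one, Matrix.head_cons, Matrix.cons_val_two, Matrix.tail_cons]
  all_goals ring

lemma step4_0 : cremonaSubst (-X 0^7 * X 1^4 * X 2^5 + 2 * X 0^7 * X 1^3 * X 2^6 - X 0^7 * X 1^2 * X 2^7 + X 0^6 * X 1^5 * X 2^5 - X 0^6 * X 1^4 * X 2^6 - X 0^6 * X 1^3 * X 2^7 + X 0^6 * X 1^2 * X 2^8 - X 0^5 * X 1^5 * X 2^6 + 2 * X 0^5 * X 1^4 * X 2^7 - X 0^5 * X 1^3 * X 2^8) = X 0^14 * X 1^9 * X 2^9 - 5 * X 0^14 * X 1^8 * X 2^10 + 10 * X 0^14 * X 1^7 * X 2^11 - 10 * X 0^14 * X 1^6 * X 2^12 + 5 * X 0^14 * X 1^5 * X 2^13 - X 0^14 * X 1^4 * X 2^14 - 2 * X 0^13 * X 1^10 * X 2^9 + 9 * X 0^13 * X 1^9 * X 2^10 - 15 * X 0^13 * X 1^8 * X 2^11 + 10 * X 0^13 * X 1^7 *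 X 2^12 - 3 * X 0^13 * X 1^5 * X 2^14 + X 0^13 * X 1^4 * X 2^15 + X 0^12 * X 1^11 * X 2^9 - 3 * X 0^12 * X 1^10 * X 2^10 + 10 * X 0^12 * X 1^8 * X 2^12 - 15 * X 0^12 * X 1^7 * X 2^13 + 9 * X 0^12 * X 1^6 * X 2^14 - 2 * X 0^12 * X 1^5 * X 2^15 - X 0^11 * X 1^11 * X 2^10 + 5 * X 0^11 * X 1^10 * X 2^11 - 10 * X 0^11 * X 1^9 * X 2^12 + 10 * X 0^11 * X 1^8 * X 2^13 - 5 * X 0^11 * X 1^7 * X 2^14 + X 0^11 * X 1^6 * X 2^15 := by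
  simp only [cremonaSubst, cremonaTriple, map_add, map_sub, map_neg, map_mul, map_pow, map_ofNat, bind₁_X_right, Matrix.cons_val_zero, Matrix.cons_val_one, Matrix.head_cons, Matrix.cons_val_two, Matrix.tail_cons]
  all_goals ring

lemma step4_1 : cremonaSubst (X 0^7 * X 1^5 * X 2^4 - 3 * X 0^7 * X 1^4 * X 2^5 + 3 * X 0^7 * X 1^3 * X 2^6 - X 0^7 * X 1^2 * X 2^7 - X 0^6 * X 1^6 * X 2^4 + 2 * X 0^6 * X 1^5 * X 2^5 - 2 * X 0^6 * X 1^3 * X 2^7 + X 0^6 * X 1^2 * X 2^8 + X 0^5 * X 1^6 * X 2^5 - 3 * X 0^5 * X 1^5 * X 2^6 + 3 * X 0^5 * X 1^4 * X 2^7 - X 0^5 * X 1^3 * X 2^8) = X 0^13 * X 1^10 * X 2^9 - 5 * X 0^13 * X 1^9 * X 2^10 + 10 * X 0^13 * X 1^8 * X 2^11 - 10 * X 0^13 * X 1^7 * X 2^12 + 5 * X 0^13 * X 1^6 * X 2^13 - X 0^13 * X 1^5 * X 2^14 - 2 * X 0^12 * X 1^11 * X 2^9 + 9 * X 0^12 *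 X 1^10 * X 2^10 - 15 * X 0^12 * X 1^9 * X 2^11 + 10 * X 0^12 * X 1^8 * X 2^12 - 3 * X 0^12 * X 1^6 * X 2^14 + X 0^12 * X 1^5 * X 2^15 + X 0^11 * X 1^12 * X 2^9 - 3 * X 0^11 * X 1^11 * X 2^10 + 10 * X 0^11 * X 1^9 * X 2^12 - 15 * X 0^11 * X 1^8 * X 2^13 + 9 * X 0^11 * X 1^7 * X 2^14 - 2 * X 0^11 * X 1^6 * X 2^15 - X 0^10 * X 1^12 * X 2^10 + 5 * X 0^10 * X 1^11 * X 2^11 - 10 * X 0^10 * X 1^10 * X 2^12 + 10 * X 0^10 * X 1^9 * X 2^13 - 5 * X 0^10 * X 1^8 * X 2^14 + X 0^10 * X 1^7 * X 2^15 := by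
  simp only [cremonaSubst, cremonaTriple, map_add, map_sub, map_neg, map_mul, map_pow, map_ofNat, bind₁_X_right, Matrix.cons_val_zero, Matrix.cons_val_one, Matrix.head_cons, Matrix.cons_val_two, Matrix.tail_cons]
  all_goals ring

lemma step4_2 : cremonaSubst (-X 0^6 * X 1^5 * X 2^5 + 3 * X 0^6 * X 1^4 * X 2^6 - 3 * X 0^6 * X 1^3 * X 2^7 + X 0^6 * X 1^2 * X 2^8 + X 0^5 * X 1^6 * X 2^5 - 3 * X 0^5 * X 1^5 * X 2^6 + 3 * X 0^5 * X 1^4 * X 2^7 - X 0^5 * X 1^3 * X 2^8) = X 0^13 * X 1^9 * X 2^10 - 5 * X 0^13 * X 1^8 * X 2^11 + 10 * X 0^13 * X 1^7 * X 2^12 - 10 * X 0^13 * X 1^6 * X 2^13 + 5 * X 0^13 * X 1^5 * X 2^14 - X 0^13 * X 1^4 * X 2^15 - 2 * X 0^12 * X 1^10 * X 2^10 + 9 * X 0^12 * X 1^9 * X 2^11 - 15 * X 0^12 * X 1^8 * X 2^12 + 10 * X 0^12 * X 1^7 * X 2^13 - 3 * X 0^12 * X 1^5 * X 2^15 + X 0^12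 * X 1^4 * X 2^16 + X 0^11 * X 1^11 * X 2^10 - 3 * X 0^11 * X 1^10 * X 2^11 + 10 * X 0^11 * X 1^8 * X 2^13 - 15 * X 0^11 * X 1^7 * X 2^14 + 9 * X 0^11 * X 1^6 * X 2^15 - 2 * X 0^11 * X 1^5 * X 2^16 - X 0^10 * X 1^11 * X 2^11 + 5 * X 0^10 * X 1^10 * X 2^12 - 10 * X 0^10 * X 1^9 * X 2^13 + 10 * X 0^10 * X 1^8 * X 2^14 - 5 * X 0^10 * X 1^7 * X 2^15 + X 0^10 * X 1^6 * X 2^16 := by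
  simp only [cremonaSubst, cremonaTriple, map_add, map_sub, map_neg, map_mul, map_pow, map_ofNat, bind₁_X_right, Matrix.cons_val_zero, Matrix.cons_val_one, Matrix.head_cons, Matrix.cons_val_two, Matrix.tail_cons]
  all_goals ring

lemma iter5_0 : cremonaSubst^[5] (X 0) = X 0^14 * X 1^9 * X 2^9 - 5 * X 0^14 * X 1^8 * X 2^10 + 10 * X 0^14 * X 1^7 * X 2^11 - 10 * X 0^14 * X 1^6 * X 2^12 + 5 * X 0^14 * X 1^5 * X 2^13 - X 0^14 * X 1^4 * X 2^14 - 2 * X 0^13 * X 1^10 * X 2^9 + 9 * X 0^13 * X 1^9 * X 2^10 - 15 * X 0^13 * X 1^8 * X 2^11 + 10 * X 0^13 * X 1^7 * X 2^12 - 3 * X 0^13 * X 1^5 * X 2^14 + X 0^13 * X 1^4 * X 2^15 + X 0^12 * X 1^11 * X 2^9 - 3 * X 0^12 * X 1^10 * X 2^10 + 10 * X 0^12 * X 1^8 * X 2^12 - 15 * X 0^12 * X 1^7 * X 2^13 + 9 * X 0^12 * X 1^6 * X 2^14 - 2 * X 0^12 * X 1^5 * X 2^15 - X 0^11 * X 1^11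 * X 2^10 + 5 * X 0^11 * X 1^10 * X 2^11 - 10 * X 0^11 * X 1^9 * X 2^12 + 10 * X 0^11 * X 1^8 * X 2^13 - 5 * X 0^11 * X 1^7 * X 2^14 + X 0^11 * X 1^6 * X 2^15 := by
  show cremonaSubst (cremonaSubst (cremonaSubst (cremonaSubst (cremonaSubst (X 0))))) = _
  rw [step0_0, step1_0, step2_0, step3_0, step4_0]

lemma iter5_1 : cremonaSubst^[5] (X 1) = X 0^13 * X 1^10 * X 2^9 - 5 * X 0^13 * X 1^9 * X 2^10 + 10 * X 0^13 * X 1^8 * X 2^11 - 10 * X 0^13 * X 1^7 * X 2^12 + 5 * X 0^13 * X 1^6 * X 2^13 - X 0^13 * X 1^5 * X 2^14 - 2 * X 0^12 * X 1^11 * X 2^9 + 9 * X 0^12 * X 1^10 * X 2^10 - 15 * X 0^12 * X 1^9 * X 2^11 + 10 * X 0^12 * X 1^8 * X 2^12 - 3 * X 0^12 * X 1^6 * X 2^14 + X 0^12 * X 1^5 * X 2^15 + X 0^11 * X 1^12 * X 2^9 - 3 * X 0^11 * X 1^11 * X 2^10 + 10 * X 0^11 * X 1^9 * X 2^12 - 15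 * X 0^11 * X 1^8 * X 2^13 + 9 * X 0^11 * X 1^7 * X 2^14 - 2 * X 0^11 * X 1^6 * X 2^15 - X 0^10 * X 1^12 * X 2^10 + 5 * X 0^10 * X 1^11 * X 2^11 - 10 * X 0^10 * X 1^10 * X 2^12 + 10 * X 0^10 * X 1^9 * X 2^13 - 5 * X 0^10 * X 1^8 * X 2^14 + X 0^10 * X 1^7 * X 2^15 := by
  show cremonaSubst (cremonaSubst (cremonaSubst (cremonaSubst (cremonaSubst (X 1))))) = _
  rw [step0_1, step1_1, step2_1, step3_1, step4_1]

lemma iter5_2 : cremonaSubst^[5] (X 2) = X 0^13 * X 1^9 * X 2^10 - 5 * X 0^13 * X 1^8 * X 2^11 + 10 * X 0^13 * X 1^7 * X 2^12 - 10 * X 0^13 * X 1^6 * X 2^13 + 5 * X 0^13 * X 1^5 * X 2^14 - X 0^13 * X 1^4 * X 2^15 - 2 * X 0^12 * X 1^10 * X 2^10 + 9 * X 0^12 * X 1^9 * X 2^11 - 15 * X 0^12 * X 1^8 * X 2^12 + 10 * X 0^12 * X 1^7 * X 2^13 - 3 * X 0^12 * X 1^5 * X 2^15 + X 0^12 * X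 1^4 * X 2^16 + X 0^11 * X 1^11 * X 2^10 - 3 * X 0^11 * X 1^10 * X 2^11 + 10 * X 0^11 * X 1^8 * X 2^13 - 15 * X 0^11 * X 1^7 * X 2^14 + 9 * X 0^11 * X 1^6 * X 2^15 - 2 * X 0^11 * X 1^5 * X 2^16 - X 0^10 * X 1^11 * X 2^11 + 5 * X 0^10 * X 1^10 * X 2^12 - 10 * X 0^10 * X 1^9 * X 2^13 + 10 * X 0^10 * X 1^8 * X 2^14 - 5 * X 0^10 * X 1^7 * X 2^15 + X 0^10 * X 1^6 * X 2^16 := by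
  show cremonaSubst (cremonaSubst (cremonaSubst (cremonaSubst (cremonaSubst (X 2))))) = _
  rw [step0_2, step1_2, step2_2, step3_2, step4_2]

lemma final_0 : cremonaSubst^[5] (X 0) = P5 * X 0 := by
  rw [iter5_0, P5]; ring

lemma final_1 : cremonaSubst^[5] (X 1) = P5 * X 1 := by
  rw [iter5_1, P5]; ring

lemma final_2 : cremonaSubst^[5] (X 2) = P5 * X 2 := by
  rw [iter5_2, P5]; ring

theorem fifth_iterate_is_projectively_identity :
    ∃ P : MvPolynomial (Fin 3) ℂ, P ≠ 0 ∧
      ∀ i : Fin 3, cremonaSubst^[5] (X i) = P * X i := by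
  refine ⟨P5, P5_ne, fun i => ?_⟩
  fin_cases i
  · exact final_0
  · exact final_1
  · exact final_2
end

section
/- Let F ∈ ℂ[x,z,w], viewed inside the polynomial ring ℂ[x,y,z,w], and let λ ∈ ℂ be a primitive 5th root of unity. The ℂ-algebra automorphism of ℂ[x,y,z,w] sending y ↦ λy and fixing x, z, w preserves the ideal (xy⁵ − F) and hence descends to an automorphism σ of T := ℂ[x,y,z,w]/(xy⁵ − F). Then: (i) the subalgebra T^σ of σ-invariant elements is generated as a ℂ-algebra by the residue classes of x, y⁵, z, w; and (ii) the ℂ-algebra homomorphism ℂ[X,Z,W,U]/(XU − F(X,Z,W)) → T^σ sending X, Z, W, U to the residue classes of x, z, w, y⁵ respectively is a well-defined isomorphism. -/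
/-!
STATEMENT 4: Let F ∈ ℂ[x,z,w] ⊂ ℂ[x,y,z,w] and λ a primitive 5th root of unity.
The automorphism of ℂ[x,y,z,w] sending y ↦ λy and fixing x,z,w preserves the
ideal (xy⁵ − F), hence descends to an automorphism σ of
T = ℂ[x,y,z,w]/(xy⁵ − F). Then (i) T^σ is generated as ℂ-algebra by the
classes of x, y⁵, z, w, and (ii) the map
ℂ[X,Z,W,U]/(XU − F(X,Z,W)) → T^σ, (X,Z,W,U) ↦ (x,z,w,y⁵), is a well-defined
isomorphism.
-/

open MvPolynomial

noncomputable section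

/-- `F(x,z,w)` viewed in `ℂ[x,y,z,w]` (variables `x,y,z,w` indexed `0,1,2,3`). -/
def Fxyzw (F₀ : MvPolynomial (Fin 3) ℂ) : MvPolynomial (Fin 4) ℂ :=
  rename ![0, 2, 3] F₀

/-- The principal ideal `(x·y⁵ − F)`. -/
def sexticIdeal (F₀ : MvPolynomial (Fin 3) ℂ) : Ideal (MvPolynomial (Fin 4) ℂ) :=
  Ideal.span {X 0 * X 1 ^ 5 - Fxyzw F₀}

/-- The ℂ-algebra endomorphism of `ℂ[x,y,z,w]` sending `y ↦ λy` and fixing `x,z,w`. -/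
def scaleY (lam : ℂ) : MvPolynomial (Fin 4) ℂ →ₐ[ℂ] MvPolynomial (Fin 4) ℂ :=
  aeval (fun i : Fin 4 => if i = 1 then C lam * X 1 else X i)

/-- The quotient ring `T = ℂ[x,y,z,w]/(xy⁵ − F)`. -/
abbrev Tq (F₀ : MvPolynomial (Fin 3) ℂ) : Type :=
  MvPolynomial (Fin 4) ℂ ⧸ sexticIdeal F₀

/-- The projection to the quotient. -/
def mkT (F₀ : MvPolynomial (Fin 3) ℂ) : MvPolynomial (Fin 4) ℂ →+* Tq F₀ :=
  Ideal.Quotient.mk (sexticIdeal F₀)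

/-- The ℂ-algebra map `ℂ[X,Z,W,U] → T`, sending `X,Z,W,U` to the residue classes
of `x,z,w,y⁵` (variables `X,Z,W,U` indexed `0,1,2,3`). -/
def ψT (F₀ : MvPolynomial (Fin 3) ℂ) : MvPolynomial (Fin 4) ℂ →ₐ[ℂ] Tq F₀ :=
  aeval ![mkT F₀ (X 0), mkT F₀ (X 2), mkT F₀ (X 3), mkT F₀ (X 1) ^ 5]

/-!
The substitution `y ↦ λy` multiplies each monomial by `λ` raised to its `y`-degree, so the
polynomials it fixes are exactly those in `x, y⁵, z, w`: the image of the injective map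
`ℂ[X,Z,W,U] → ℂ[x,y,z,w]`, `(X,Z,W,U) ↦ (x,z,w,y⁵)`, which sends `XU − F` to `xy⁵ − F`.
Since `5` is invertible in `ℂ`, the Reynolds operator `(1/5) ∑ₖ σᵏ` replaces any representative
of a `σ`-invariant class of `T` by an invariant polynomial, which gives the generators of `T^σ`;
applied to an invariant multiple `h · (xy⁵ − F)` it makes the cofactor `h` invariant, which
gives the kernel.
-/

open Finset

section Reynolds

variable {K A : Type*} [Field K] [Ring A] [Algebra K A]

def reynolds (σ : A →ₐ[K] A) (n : ℕ) : A →ₗ[K] A :=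
  (n : K)⁻¹ • ∑ k ∈ range n, (σ ^ k).toLinearMap

variable (σ : A →ₐ[K] A) (n : ℕ)

lemma reynolds_apply (a : A) : reynolds σ n a = (n : K)⁻¹ • ∑ k ∈ range n, (σ ^ k) a := by
  simp [reynolds]

lemma apply_reynolds_of_pow_eq_one (hσ : σ ^ n = 1) (a : A) :
    σ (reynolds σ n a) = reynolds σ n a := by
  have hshift : ∑ k ∈ range n, (σ ^ (k + 1)) a = ∑ k ∈ range n, (σ ^ k) a := by
    have h := sum_range_succ (fun k => (σ ^ k) a) n
    rw [sum_range_succ', hσ, pow_zero] at h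
    exact add_right_cancel h
  rw [reynolds_apply, map_smul, map_sum, ← hshift]
  simp only [pow_succ', AlgHom.mul_apply]

lemma reynolds_mul_of_apply_eq {a : A} (ha : σ a = a) (b : A) :
    reynolds σ n (a * b) = a * reynolds σ n b := by
  simp only [reynolds_apply, map_mul, AlgHom.coe_pow, Function.iterate_fixed ha, mul_sum,
    mul_smul_comm]

lemma map_reynolds_of_apply_eq {B : Type*} [Semiring B] [Algebra K B] (f : A →ₐ[K] B)
    (τ : B →ₐ[K] B) (hfτ : ∀ a, f (σ a) = τ (f a)) (hn : (n : K) ≠ 0) {a : A}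
    (ha : τ (f a) = f a) : f (reynolds σ n a) = f a := by
  have hk : ∀ k, f ((σ ^ k) a) = f a := by
    intro k
    induction k with
    | zero => rfl
    | succ k ih => rw [pow_succ', AlgHom.mul_apply, hfτ, ih, ha]
  rw [reynolds_apply, map_smul, map_sum]
  simp only [hk, sum_const, card_range, ← Nat.cast_smul_eq_nsmul K, smul_smul,
    inv_mul_cancel₀ hn, one_smul]

lemma reynolds_eq_self (hn : (n : K) ≠ 0) {a : A} (ha : σ a = a) : reynolds σ n a = a :=
  map_reynolds_of_apply_eq σ n (AlgHom.id K A) σ (fun _ => rfl) hn ha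

end Reynolds

section ScaleY

lemma scaleY_X_one (μ : ℂ) : scaleY μ (X 1) = C μ * X 1 := by
  simp [scaleY]

lemma scaleY_X_of_ne (μ : ℂ) {i : Fin 4} (hi : i ≠ 1) : scaleY μ (X i) = X i := by
  simp [scaleY, hi]

lemma scaleY_comp_scaleY (a b : ℂ) : (scaleY a).comp (scaleY b) = scaleY (a * b) := by
  refine algHom_ext fun i => ?_
  by_cases hi : i = 1
  · subst hi
    simp only [AlgHom.comp_apply, scaleY_X_one, map_mul, algHom_C, algebraMap_eq]
    ring
  · simp only [AlgHom.comp_apply, scaleY_X_of_ne _ hi]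

lemma scaleY_one : scaleY 1 = 1 :=
  algHom_ext fun i => by
    by_cases hi : i = 1
    · subst hi; simp [scaleY_X_one]
    · simp [scaleY_X_of_ne _ hi]

lemma scaleY_pow (μ : ℂ) (k : ℕ) : scaleY μ ^ k = scaleY (μ ^ k) := by
  induction k with
  | zero => rw [pow_zero, pow_zero, scaleY_one]
  | succ k ih =>
    rw [pow_succ', ih, pow_succ']
    exact scaleY_comp_scaleY μ (μ ^ k)

lemma scaleY_pow_eq_one {μ : ℂ} {n : ℕ} (hμ : μ ^ n = 1) : scaleY μ ^ n = 1 := by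
  rw [scaleY_pow, hμ, scaleY_one]

def scaleYEquiv {μ : ℂ} (hμ : μ ≠ 0) : MvPolynomial (Fin 4) ℂ ≃ₐ[ℂ] MvPolynomial (Fin 4) ℂ :=
  AlgEquiv.ofAlgHom (scaleY μ) (scaleY μ⁻¹)
    (by rw [scaleY_comp_scaleY, mul_inv_cancel₀ hμ, scaleY_one]; rfl)
    (by rw [scaleY_comp_scaleY, inv_mul_cancel₀ hμ, scaleY_one]; rfl)

lemma scaleY_monomial (μ : ℂ) (s : Fin 4 →₀ ℕ) (a : ℂ) :
    scaleY μ (monomial s a) = C (μ ^ s 1) * monomial s a := by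
  rw [scaleY, aeval_monomial, Finsupp.prod_fintype _ _ (fun i => pow_zero _),
    Fin.prod_univ_four, monomial_eq, Finsupp.prod_fintype _ _ (fun i => pow_zero _),
    Fin.prod_univ_four]
  simp only [ite_true, if_neg (by decide : (0:Fin 4) ≠ 1),
    if_neg (by decide : (2:Fin 4) ≠ 1), if_neg (by decide : (3:Fin 4) ≠ 1),
    algebraMap_eq, mul_pow, ← C_pow]
  ring

lemma coeff_scaleY (μ : ℂ) (p : MvPolynomial (Fin 4) ℂ) (s : Fin 4 →₀ ℕ) :
    coeff s (scaleY μ p) = μ ^ s 1 * coeff s p := by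
  induction p using MvPolynomial.induction_on' with
  | monomial u a =>
    rw [scaleY_monomial, coeff_C_mul, coeff_monomial]
    split_ifs with h
    · rw [h]
    · rw [mul_zero, mul_zero]
  | add p q hp hq => rw [map_add, coeff_add, coeff_add, hp, hq, mul_add]

lemma scaleY_comp_rename (μ : ℂ) :
    (scaleY μ).comp (rename ![0, 2, 3]) = rename ![0, 2, 3] :=
  algHom_ext fun i => by fin_cases i <;> simp [scaleY]

lemma scaleY_sextic {μ : ℂ} (hμ : μ ^ 5 = 1) (F₀ : MvPolynomial (Fin 3) ℂ) :
    scaleY μ (X 0 * X 1 ^ 5 - Fxyzw F₀) = X 0 * X 1 ^ 5 - Fxyzw F₀ := by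
  rw [map_sub, map_mul, map_pow, scaleY_X_one, scaleY_X_of_ne μ (by decide), mul_pow, ← C_pow,
    hμ, C_1, one_mul, Fxyzw, ← AlgHom.comp_apply, scaleY_comp_rename]

lemma map_scaleY_sexticIdeal {μ : ℂ} (hμ : μ ^ 5 = 1) (F₀ : MvPolynomial (Fin 3) ℂ) :
    Ideal.map (scaleY μ) (sexticIdeal F₀) = sexticIdeal F₀ := by
  rw [sexticIdeal, Ideal.map_span, Set.image_singleton, scaleY_sextic hμ]

end ScaleY

section InvariantsMap

def invariantsMap : MvPolynomial (Fin 4) ℂ →ₐ[ℂ] MvPolynomial (Fin 4) ℂ :=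
  aeval ![X 0, X 2, X 3, X 1 ^ 5]

def invariantsExponent (s : Fin 4 →₀ ℕ) : Fin 4 →₀ ℕ :=
  Finsupp.single 0 (s 0) + Finsupp.single 1 (5 * s 3) +
    Finsupp.single 2 (s 1) + Finsupp.single 3 (s 2)

lemma invariantsExponent_apply (s : Fin 4 →₀ ℕ) :
    invariantsExponent s 0 = s 0 ∧ invariantsExponent s 1 = 5 * s 3 ∧
      invariantsExponent s 2 = s 1 ∧ invariantsExponent s 3 = s 2 := by
  simp [invariantsExponent]

lemma invariantsExponent_injective : Function.Injective invariantsExponent := by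
  intro s u h
  obtain ⟨hs0, hs1, hs2, hs3⟩ := invariantsExponent_apply s
  obtain ⟨hu0, hu1, hu2, hu3⟩ := invariantsExponent_apply u
  have h0 := DFunLike.congr_fun h 0
  have h1 := DFunLike.congr_fun h 1
  have h2 := DFunLike.congr_fun h 2
  have h3 := DFunLike.congr_fun h 3
  ext i
  fin_cases i <;> simp only [Fin.zero_eta, Fin.mk_one, Fin.reduceFinMk] <;> omega

lemma invariantsMap_monomial (s : Fin 4 →₀ ℕ) (a : ℂ) :
    invariantsMap (monomial s a) = monomial (invariantsExponent s) a := by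
  obtain ⟨h0, h1, h2, h3⟩ := invariantsExponent_apply s
  rw [invariantsMap, aeval_monomial, Finsupp.prod_fintype _ _ (fun i => pow_zero _),
    Fin.prod_univ_four, monomial_eq, Finsupp.prod_fintype _ _ (fun i => pow_zero _),
    Fin.prod_univ_four, h0, h1, h2, h3]
  simp only [Matrix.cons_val_zero, Matrix.cons_val_one, Matrix.head_cons, algebraMap_eq,
    Matrix.cons_val_two, Matrix.tail_cons, Matrix.cons_val_three, pow_mul]
  ring

lemma coeff_invariantsMap (p : MvPolynomial (Fin 4) ℂ) (u : Fin 4 →₀ ℕ) :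
    coeff (invariantsExponent u) (invariantsMap p) = coeff u p := by
  induction p using MvPolynomial.induction_on' with
  | monomial s a =>
    simp only [invariantsMap_monomial, coeff_monomial, invariantsExponent_injective.eq_iff]
  | add p q hp hq => rw [map_add, coeff_add, coeff_add, hp, hq]

lemma invariantsMap_injective : Function.Injective invariantsMap := fun p q h =>
  MvPolynomial.ext _ _ fun u => by rw [← coeff_invariantsMap p u, ← coeff_invariantsMap q u, h]

lemma exists_invariantsExponent_eq {s : Fin 4 →₀ ℕ} (hs : 5 ∣ s 1) :
    ∃ t, invariantsExponent t = s := by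
  let t : Fin 4 →₀ ℕ := Finsupp.single 0 (s 0) + Finsupp.single 1 (s 2) + Finsupp.single 2 (s 3) +
    Finsupp.single 3 (s 1 / 5)
  have ht : t 0 = s 0 ∧ t 1 = s 2 ∧ t 2 = s 3 ∧ t 3 = s 1 / 5 := by simp [t]
  obtain ⟨h0, h1, h2, h3⟩ := invariantsExponent_apply t
  refine ⟨t, Finsupp.ext fun i => ?_⟩
  fin_cases i <;> simp only [Fin.zero_eta, Fin.mk_one, Fin.reduceFinMk] <;> omega

lemma mem_range_invariantsMap_of_dvd {q : MvPolynomial (Fin 4) ℂ}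
    (hq : ∀ s ∈ q.support, 5 ∣ s 1) : q ∈ invariantsMap.range := by
  rw [q.as_sum]
  refine Subalgebra.sum_mem _ fun s hs => ?_
  obtain ⟨t, rfl⟩ := exists_invariantsExponent_eq (hq s hs)
  exact ⟨monomial t _, invariantsMap_monomial t _⟩

lemma mem_range_invariantsMap_of_scaleY_eq {lam : ℂ} (hlam : IsPrimitiveRoot lam 5)
    {q : MvPolynomial (Fin 4) ℂ} (hq : scaleY lam q = q) : q ∈ invariantsMap.range := by
  refine mem_range_invariantsMap_of_dvd fun s hs => ?_
  have hcoeff := coeff_scaleY lam q s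
  rw [hq] at hcoeff
  rw [← hlam.pow_eq_one_iff_dvd]
  exact (mul_eq_right₀ (mem_support_iff.mp hs)).mp hcoeff.symm

lemma scaleY_comp_invariantsMap {μ : ℂ} (hμ : μ ^ 5 = 1) :
    (scaleY μ).comp invariantsMap = invariantsMap := by
  refine algHom_ext fun i => ?_
  fin_cases i <;> simp [invariantsMap, scaleY, mul_pow, ← C_pow, hμ]

lemma invariantsMap_sextic (F₀ : MvPolynomial (Fin 3) ℂ) :
    invariantsMap (X 0 * X 3 - rename Fin.castSucc F₀) = X 0 * X 1 ^ 5 - Fxyzw F₀ := by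
  have hcomp : invariantsMap.comp (rename Fin.castSucc) = rename ![0, 2, 3] :=
    algHom_ext fun i => by fin_cases i <;> simp [invariantsMap]
  rw [map_sub, ← AlgHom.comp_apply, hcomp, Fxyzw]
  simp [invariantsMap]

lemma ψT_eq_comp (F₀ : MvPolynomial (Fin 3) ℂ) :
    ψT F₀ = (Ideal.Quotient.mkₐ ℂ (sexticIdeal F₀)).comp invariantsMap :=
  algHom_ext fun i => by fin_cases i <;> simp [ψT, invariantsMap, mkT, Ideal.Quotient.mkₐ_eq_mk]

end InvariantsMap

section Invariants

variable {F₀ : MvPolynomial (Fin 3) ℂ}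

lemma reynolds_mem_range_invariantsMap {lam : ℂ} (hlam : IsPrimitiveRoot lam 5)
    (p : MvPolynomial (Fin 4) ℂ) : reynolds (scaleY lam) 5 p ∈ invariantsMap.range :=
  mem_range_invariantsMap_of_scaleY_eq hlam <|
    apply_reynolds_of_pow_eq_one _ _ (scaleY_pow_eq_one hlam.pow_eq_one) p

lemma range_ψT : (ψT F₀).range =
    Algebra.adjoin ℂ {mkT F₀ (X 0), mkT F₀ (X 1) ^ 5, mkT F₀ (X 2), mkT F₀ (X 3)} := by
  rw [ψT, ← Algebra.adjoin_range_eq_range_aeval]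
  congr 1
  simp only [Matrix.range_cons, Matrix.range_empty, Set.union_empty, Set.union_singleton]
  ext v
  simp only [Set.mem_union, Set.mem_insert_iff, Set.mem_singleton_iff]
  tauto

lemma equalizer_eq_range_ψT {lam : ℂ} (hlam : IsPrimitiveRoot lam 5) (τ : Tq F₀ →ₐ[ℂ] Tq F₀)
    (hτ : ∀ r, τ (mkT F₀ r) = mkT F₀ (scaleY lam r)) :
    AlgHom.equalizer τ (AlgHom.id ℂ (Tq F₀)) = (ψT F₀).range := by
  have hmk : ∀ r, (Ideal.Quotient.mkₐ ℂ (sexticIdeal F₀)) r = mkT F₀ r := fun _ => rfl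
  refine le_antisymm (fun t ht => ?_) ?_
  · obtain ⟨p, rfl⟩ := Ideal.Quotient.mk_surjective t
    have hlift : mkT F₀ (reynolds (scaleY lam) 5 p) = mkT F₀ p :=
      map_reynolds_of_apply_eq (scaleY lam) 5 (Ideal.Quotient.mkₐ ℂ (sexticIdeal F₀)) τ
        (fun r => (hτ r).symm) (by norm_num) ht
    obtain ⟨q, hq⟩ := (AlgHom.mem_range _).mp (reynolds_mem_range_invariantsMap hlam p)
    refine (AlgHom.mem_range _).mpr ⟨q, ?_⟩
    rw [ψT_eq_comp, AlgHom.comp_apply, hq, hmk, hlift]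
    rfl
  · intro t ht
    obtain ⟨q, rfl⟩ := (AlgHom.mem_range _).mp ht
    rw [AlgHom.mem_equalizer, ψT_eq_comp, AlgHom.comp_apply, hmk, hτ, ← AlgHom.comp_apply,
      scaleY_comp_invariantsMap hlam.pow_eq_one]
    rfl

lemma ker_ψT : RingHom.ker (ψT F₀) = Ideal.span {X 0 * X 3 - rename Fin.castSucc F₀} := by
  obtain ⟨lam, hlam⟩ : ∃ lam : ℂ, IsPrimitiveRoot lam 5 :=
    ⟨_, Complex.isPrimitiveRoot_exp 5 (by norm_num)⟩
  refine le_antisymm (fun p hp => ?_) ?_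
  · obtain ⟨h, hh⟩ : ∃ h, h * (X 0 * X 1 ^ 5 - Fxyzw F₀) = invariantsMap p := by
      rw [← Ideal.mem_span_singleton', ← sexticIdeal, ← Ideal.Quotient.eq_zero_iff_mem]
      rwa [RingHom.mem_ker, ψT_eq_comp] at hp
    have hfixed : scaleY lam (invariantsMap p) = invariantsMap p := by
      rw [← AlgHom.comp_apply, scaleY_comp_invariantsMap hlam.pow_eq_one]
    have hinv : invariantsMap p = reynolds (scaleY lam) 5 h * (X 0 * X 1 ^ 5 - Fxyzw F₀) := by
      rw [← reynolds_eq_self (scaleY lam) 5 (by norm_num) hfixed, ← hh, mul_comm,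
        reynolds_mul_of_apply_eq _ _ (scaleY_sextic hlam.pow_eq_one F₀), mul_comm]
    obtain ⟨q, hq⟩ := (AlgHom.mem_range _).mp (reynolds_mem_range_invariantsMap hlam h)
    refine Ideal.mem_span_singleton'.mpr ⟨q, invariantsMap_injective ?_⟩
    rw [map_mul, invariantsMap_sextic, hq, hinv]
  · rw [Ideal.span_le, Set.singleton_subset_iff, SetLike.mem_coe, RingHom.mem_ker, ψT_eq_comp,
      AlgHom.comp_apply, invariantsMap_sextic, Ideal.Quotient.mkₐ_eq_mk,
      Ideal.Quotient.eq_zero_iff_mem]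
    exact Ideal.subset_span rfl

end Invariants

theorem quotient_of_degree_one_del_pezzo_by_order_five
    (F₀ : MvPolynomial (Fin 3) ℂ) (lam : ℂ) (hlam : IsPrimitiveRoot lam 5) :
    -- the automorphism y ↦ λy preserves the ideal (xy⁵ − F) ...
    Ideal.map (scaleY lam) (sexticIdeal F₀) = sexticIdeal F₀ ∧
    -- ... hence descends to an automorphism σ of T ...
    ∃ σ : Tq F₀ ≃ₐ[ℂ] Tq F₀,
      (∀ r : MvPolynomial (Fin 4) ℂ, σ (mkT F₀ r) = mkT F₀ (scaleY lam r)) ∧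
      ∀ τ : Tq F₀ ≃ₐ[ℂ] Tq F₀,
        (∀ r : MvPolynomial (Fin 4) ℂ, τ (mkT F₀ r) = mkT F₀ (scaleY lam r)) →
        -- (i)  T^σ is generated by the classes of x, y⁵, z, w:
        (AlgHom.equalizer (τ : Tq F₀ →ₐ[ℂ] Tq F₀) (AlgHom.id ℂ (Tq F₀)) =
          Algebra.adjoin ℂ
            {mkT F₀ (X 0), mkT F₀ (X 1) ^ 5, mkT F₀ (X 2), mkT F₀ (X 3)}) ∧
        -- (ii) ℂ[X,Z,W,U]/(XU − F(X,Z,W)) ≅ T^σ via (X,Z,W,U) ↦ (x,z,w,y⁵):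
        -- the map ℂ[X,Z,W,U] → T has image exactly T^σ and kernel exactly
        -- the ideal (XU − F(X,Z,W)).
        ((ψT F₀).range =
          AlgHom.equalizer (τ : Tq F₀ →ₐ[ℂ] Tq F₀) (AlgHom.id ℂ (Tq F₀)) ∧
         RingHom.ker (ψT F₀) =
          Ideal.span {X 0 * X 3 - rename Fin.castSucc F₀}) := by
  have hmap := map_scaleY_sexticIdeal hlam.pow_eq_one F₀
  refine ⟨hmap, Ideal.quotientEquivAlg _ _ (scaleYEquiv (hlam.ne_zero (by norm_num))) hmap.symm,
    fun r => Ideal.quotientEquivAlg_mk _ _ _ r, fun τ hτ => ?_⟩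
  have hfixed := equalizer_eq_range_ψT hlam (τ : Tq F₀ →ₐ[ℂ] Tq F₀) hτ
  exact ⟨hfixed.trans range_ψT, hfixed.symm, ker_ψT⟩
end
end

section
/- Let λ ∈ ℂ be a primitive 3rd root of unity, and let G ∈ ℂ[x,y,z,w] be homogeneous of degree 3 such that the only common zero in ℂ⁴ of the four partial derivatives of G is the origin. Suppose that there exists μ ∈ ℂ with G(λx, y, z, w) = μ·G(x, y, z, w). Then there exist a ∈ ℂ with a ≠ 0 and a homogeneous cubic F ∈ ℂ[y,z,w] such that G(x,y,z,w) = a·x³ + F(y,z,w). -/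
/-!
Invariance under `x ↦ λx` makes the exponent of `x` the same modulo 3 in every monomial of `G`.
A polynomial all of whose monomials have degree at least 2 in the coordinates vanishing at a
point `v` has all partial derivatives zero at `v`. Smoothness at `(1,0,0,0)` therefore gives a
monomial with `x`-exponent at least 2, and smoothness at `(0,1,0,0)` one with `x`-exponent at
most 1. As exponents lie in `[0, 3]`, the common residue is 0: `G` consists of `x³` with a
nonzero coefficient and monomials free of `x`.
-/

open MvPolynomial

namespace Finsupp

variable {σ : Type*} [Fintype σ] [DecidableEq σ]

theorem degree_eq_apply_add_sum_compl (d : σ →₀ ℕ) (i : σ) :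
    d.degree = d i + ∑ j ∈ {i}ᶜ, d j := by
  rw [degree_eq_sum, Fintype.sum_eq_add_sum_compl i]

theorem eq_single_of_degree_eq_apply {d : σ →₀ ℕ} {i : σ}
    (h : d.degree = d i) : d = single i (d i) := by
  have hcompl : ∀ j ∈ ({i}ᶜ : Finset σ), d j = 0 := by
    rw [← Finset.sum_eq_zero_iff]
    have := d.degree_eq_apply_add_sum_compl i
    omega
  ext j
  obtain rfl | hji := eq_or_ne j i
  · rw [single_eq_same]
  · rw [single_eq_of_ne hji, hcompl j (by simpa using hji)]

end Finsupp

theorem IsPrimitiveRoot.modEq_of_pow_eq_pow {M : Type*} [CommMonoid M] {ζ : M} {k a b : ℕ}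
    (hζ : IsPrimitiveRoot ζ k) (hk : k ≠ 0) (h : ζ ^ a = ζ ^ b) : a ≡ b [MOD k] := by
  rwa [(hζ.isOfFinOrder hk).pow_eq_pow_iff_modEq, ← hζ.eq_orderOf] at h

namespace MvPolynomial

variable {σ R : Type*}

theorem IsHomogeneous.degree_eq_of_mem_support [CommSemiring R]
    {p : MvPolynomial σ R} {k : ℕ} (hp : p.IsHomogeneous k) {d : σ →₀ ℕ} (hd : d ∈ p.support) :
    d.degree = k := by
  by_contra hne
  exact mem_support_iff.mp hd (hp.coeff_eq_zero hne)

theorem coeff_aeval_ite_C_mul_X [CommSemiring R] [DecidableEq σ] (i : σ) (c : R)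
    (p : MvPolynomial σ R) (d : σ →₀ ℕ) :
    coeff d (aeval (fun j => if j = i then C c * X i else X j) p) = c ^ d i * coeff d p := by
  induction p using MvPolynomial.induction_on generalizing d with
  | C a =>
    rw [aeval_C, algebraMap_eq, coeff_C]
    split_ifs with h
    · simp [← h]
    · rw [mul_zero]
  | add p q hp hq => simp only [map_add, coeff_add, hp, hq, mul_add]
  | mul_X p j ih =>
    rw [map_mul, aeval_X, coeff_mul_X']
    by_cases hji : j = i
    · subst hji
      rw [if_pos rfl, mul_left_comm, coeff_C_mul, coeff_mul_X']
      split_ifs with hd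
      · rw [ih, ← mul_assoc, ← pow_succ', Finsupp.tsub_apply, Finsupp.single_eq_same,
          Nat.sub_add_cancel (Nat.one_le_iff_ne_zero.mpr (Finsupp.mem_support_iff.mp hd))]
      · rw [mul_zero, mul_zero]
    · rw [if_neg hji, coeff_mul_X']
      split_ifs with hd
      · rw [ih, Finsupp.tsub_apply, Finsupp.single_eq_of_ne' hji, Nat.sub_zero]
      · rw [mul_zero]

theorem modEq_of_aeval_ite_C_mul_X_eq_C_mul [CommRing R] [IsDomain R] [DecidableEq σ]
    {ζ μ : R} {k : ℕ} (hζ : IsPrimitiveRoot ζ k) (hk : k ≠ 0) {i : σ} {p : MvPolynomial σ R}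
    (h : aeval (fun j => if j = i then C ζ * X i else X j) p = C μ * p)
    {d e : σ →₀ ℕ} (hd : d ∈ p.support) (he : e ∈ p.support) : d i ≡ e i [MOD k] := by
  have hpow : ∀ f ∈ p.support, ζ ^ f i = μ := fun f hf =>
    mul_right_cancel₀ (mem_support_iff.mp hf) <| by
      rw [← coeff_aeval_ite_C_mul_X, h, coeff_C_mul]
  exact hζ.modEq_of_pow_eq_pow hk ((hpow d hd).trans (hpow e he).symm)

theorem eval_pderiv_eq_zero_of_two_le_sum [CommSemiring R] (p : MvPolynomial σ R)
    (v : σ → R) (s : Finset σ) (hv : ∀ j ∈ s, v j = 0) (hp : ∀ d ∈ p.support, 2 ≤ ∑ j ∈ s, d j)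
    (i : σ) : eval v (pderiv i p) = 0 := by
  classical
  rw [p.as_sum, map_sum, map_sum]
  refine Finset.sum_eq_zero fun d hd => ?_
  rw [pderiv_monomial, eval_monomial]
  obtain hdi | hdi := eq_or_ne (d i) 0
  · simp [hdi]
  set e := d - Finsupp.single i 1
  have hde : d = e + Finsupp.single i 1 :=
    (tsub_add_cancel_of_le (Finsupp.single_le_iff.mpr (Nat.one_le_iff_ne_zero.mpr hdi))).symm
  have hsum : ∑ j ∈ s, e j ≠ 0 := by
    have hsingle : ∑ j ∈ s, Finsupp.single i 1 j ≤ 1 := by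
      simp only [Finsupp.single_apply, Finset.sum_ite_eq]
      split_ifs <;> omega
    have := hp d hd
    rw [hde] at this
    simp only [Finsupp.coe_add, Pi.add_apply, Finset.sum_add_distrib] at this
    omega
  obtain ⟨j, hjs, hj⟩ := Finset.exists_ne_zero_of_sum_ne_zero hsum
  refine mul_eq_zero_of_right _ (Finset.prod_eq_zero (Finsupp.mem_support_iff.mpr hj) ?_)
  simp only [hv j hjs, zero_pow hj]

theorem exists_eq_C_mul_X_zero_pow_add_rename_succ [CommRing R] {n k : ℕ}
    {p : MvPolynomial (Fin (n + 1)) R} (hp : p.IsHomogeneous k)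
    (h : ∀ d ∈ p.support, d 0 = 0 ∨ d 0 = k) :
    ∃ F : MvPolynomial (Fin n) R, F.IsHomogeneous k ∧
      p = C (coeff (Finsupp.single 0 k) p) * X 0 ^ k + rename Fin.succ F := by
  set q := p - C (coeff (Finsupp.single 0 k) p) * X 0 ^ k
  have hq : ∀ d ∈ q.support, d 0 = 0 := by
    intro d hd
    rw [mem_support_iff, coeff_sub, C_mul_X_pow_eq_monomial, coeff_monomial] at hd
    have hdp : d ∈ p.support := mem_support_iff.mpr fun hd0 => hd <| by
      split_ifs with hs
      · rw [hs, hd0, sub_self]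
      · rw [hd0, sub_zero]
    refine (h d hdp).resolve_right fun hdk => hd ?_
    have hds : d = Finsupp.single 0 k :=
      hdk ▸ Finsupp.eq_single_of_degree_eq_apply ((hp.degree_eq_of_mem_support hdp).trans hdk.symm)
    rw [if_pos hds.symm, hds, sub_self]
  have hvars : (q.vars : Set (Fin (n + 1))) ⊆ Set.range Fin.succ := by
    intro j hj
    obtain ⟨d, hd, hjd⟩ := (mem_vars_iff_mem_support j).mp hj
    refine Fin.exists_succ_eq.mpr fun hj0 => Finsupp.mem_support_iff.mp hjd ?_
    rw [hj0, hq d hd]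
  obtain ⟨F, hF⟩ := exists_rename_eq_of_vars_subset_range q _ (Fin.succ_injective n) hvars
  refine ⟨F, ?_, by rw [hF, add_sub_cancel]⟩
  rw [← IsHomogeneous.rename_isHomogeneous_iff (Fin.succ_injective n), hF]
  exact hp.sub (isHomogeneous_C_mul_X_pow _ _ _)

end MvPolynomial

theorem invariant_smooth_cubic_has_normal_form
    (lam : ℂ) (hlam : IsPrimitiveRoot lam 3)
    (G : MvPolynomial (Fin 4) ℂ) (hG : G.IsHomogeneous 3)
    (hsmooth : ∀ v : Fin 4 → ℂ,
      (∀ i : Fin 4, eval v (pderiv i G) = 0) → v = 0)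
    (μ : ℂ)
    (hinv : aeval (fun i : Fin 4 => if i = 0 then C lam * X 0 else X i) G = C μ * G) :
    ∃ a : ℂ, a ≠ 0 ∧ ∃ F : MvPolynomial (Fin 3) ℂ, F.IsHomogeneous 3 ∧
      G = C a * X 0 ^ 3 + rename Fin.succ F := by
  have hlow : ∀ (v : Fin 4 → ℂ) (s : Finset (Fin 4)), v ≠ 0 → (∀ j ∈ s, v j = 0) →
      ∃ d ∈ G.support, ∑ j ∈ s, d j < 2 := by
    intro v s hv hvs
    by_contra! h
    exact hv (hsmooth v (eval_pderiv_eq_zero_of_two_le_sum G v s hvs h))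
  obtain ⟨d₁, hd₁, h₁⟩ := hlow (Pi.single 0 1) {0}ᶜ (by simp) (by simp_all)
  obtain ⟨d₂, hd₂, h₂⟩ := hlow (Pi.single 1 1) {0} (by simp) (by simp)
  have hmod : ∀ d ∈ G.support, d 0 ≡ d₁ 0 [MOD 3] := fun d hd =>
    modEq_of_aeval_ite_C_mul_X_eq_C_mul hlam three_ne_zero hinv hd hd₁
  have hdeg : ∀ d ∈ G.support, d 0 + ∑ j ∈ {0}ᶜ, d j = 3 := fun d hd =>
    (d.degree_eq_apply_add_sum_compl 0).symm.trans (hG.degree_eq_of_mem_support hd)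
  have h₁₂ := hmod d₂ hd₂
  rw [Finset.sum_singleton] at h₂
  have hd₁0 : d₁ 0 = 3 := by
    have := hdeg d₁ hd₁
    have := hdeg d₂ hd₂
    unfold Nat.ModEq at h₁₂
    omega
  obtain ⟨F, hF, hGF⟩ := exists_eq_C_mul_X_zero_pow_add_rename_succ hG fun d hd => by
    have := hdeg d hd
    have := hmod d hd
    unfold Nat.ModEq at this
    omega
  refine ⟨_, ?_, F, hF, hGF⟩
  have hd₁_eq : d₁ = Finsupp.single 0 3 :=
    (Finsupp.eq_single_of_degree_eq_apply ((hG.degree_eq_of_mem_support hd₁).trans hd₁0.symm)).trans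
      (by rw [hd₁0])
  rw [hd₁_eq] at hd₁
  exact mem_support_iff.mp hd₁
end
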